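/- arXiv:2211.03994 — 2 statements merged into one kernel-verified Lean document; each statement's English description precedes it below -/
import Mathlib

section
/- Optimism via valid bonuses: With the value functions defined by backward recursion as in the simulation lemma setup, suppose for all (s,a) and all h ∈ [H], |r̂(s,a) - r*(s,a) + ∑_{s'} (p̂(s'|s,a) - p*(s'|s,a)) V^{π,p*}_{r*}(s', h+1)| ≤ b(s,a), and define the optimistic reward r(s,a) = r̂(s,a) + b(s,a). Then for all (s,a,h), Q^{π,p̂}_{r}(s,a,h) ≥ Q^{π,p*}_{r*}(s,a,h), and consequently V^{π,p̂}_{r}(s,h) ≥ V^{π,p*}_{r*}(s,h) for all s and h. -/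
open Finset

/-- Finite-horizon value function by backward recursion, indexed by the number
of remaining steps (`val π p r 0 = V(·, H+1) = 0`). -/
def val {S A : Type*} [Fintype S] [Fintype A]
    (π : S → A → ℝ) (p : S → A → S → ℝ) (r : S → A → ℝ) : ℕ → S → ℝ
  | 0, _ => 0
  | (t + 1), s => ∑ a, π s a * (r s a + ∑ s', p s a s' * val π p r t s')

/-- Finite-horizon `Q`-function: `qval π p r t s a = r(s,a) + ∑_{s'} p(s'|s,a) V(s', t)`,
where `t` is the number of remaining steps after the current one; `Q(s,a,h)`
with `h ∈ [H]` corresponds to `qval` with `t = H - h < H`. -/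
def qval {S A : Type*} [Fintype S] [Fintype A]
    (π : S → A → ℝ) (p : S → A → S → ℝ) (r : S → A → ℝ) (t : ℕ) (s : S) (a : A) : ℝ :=
  r s a + ∑ s', p s a s' * val π p r t s'

/-- Optimism via valid bonuses: if the bonus `b` is valid, i.e. for all `(s,a)`
and all steps,
`|r̂(s,a) - r*(s,a) + ∑_{s'} (p̂(s'|s,a) - p*(s'|s,a)) V^{π,p*}_{r*}(s',h+1)| ≤ b(s,a)`,
then with optimistic reward `r = r̂ + b`, `Q^{π,p̂}_r ≥ Q^{π,p*}_{r*}` and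
`V^{π,p̂}_r ≥ V^{π,p*}_{r*}` everywhere. -/
theorem stmt_3 {S A : Type*} [Fintype S] [Fintype A]
    (H : ℕ) (π : S → A → ℝ) (phat pstar : S → A → S → ℝ)
    (rhat rstar b : S → A → ℝ)
    (hπ0 : ∀ s a, 0 ≤ π s a) (hπ1 : ∀ s, ∑ a, π s a = 1)
    (hphat0 : ∀ s a s', 0 ≤ phat s a s') (hphat1 : ∀ s a, ∑ s', phat s a s' = 1)
    (hpstar0 : ∀ s a s', 0 ≤ pstar s a s') (hpstar1 : ∀ s a, ∑ s', pstar s a s' = 1)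
    (hb : ∀ s a, 0 ≤ b s a)
    (hvalid : ∀ s a, ∀ t < H,
      |rhat s a - rstar s a +
        ∑ s', (phat s a s' - pstar s a s') * val π pstar rstar t s'| ≤ b s a) :
    (∀ t < H, ∀ s a,
        qval π pstar rstar t s a ≤ qval π phat (fun s a => rhat s a + b s a) t s a) ∧
      (∀ t ≤ H, ∀ s,
        val π pstar rstar t s ≤ val π phat (fun s a => rhat s a + b s a) t s) := by
  set r : S → A → ℝ := fun s a => rhat s a + b s a with hr
  have hq : ∀ t, (∀ s, val π pstar rstar t s ≤ val π phat r t s) → t < H →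
      ∀ s a, qval π pstar rstar t s a ≤ qval π phat r t s a := by
    intro t ihv ht s a
    have hv := (abs_le.mp (hvalid s a t ht)).1
    simp only [Finset.sum_sub_distrib, sub_mul] at hv
    have h1 : ∑ s', phat s a s' * val π pstar rstar t s' ≤
        ∑ s', phat s a s' * val π phat r t s' :=
      Finset.sum_le_sum fun s' _ => mul_le_mul_of_nonneg_left (ihv s') (hphat0 s a s')
    simp only [qval, hr]
    linarith
  have hval : ∀ t ≤ H, ∀ s, val π pstar rstar t s ≤ val π phat r t s := by
    intro t
    induction t with
    | zero => intro _ s; simp [_root_.val]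
    | succ t ih =>
      intro ht s
      have ht' : t < H := ht
      have hq' := hq t (ih (le_of_lt ht')) ht'
      show val π pstar rstar (t+1) s ≤ val π phat r (t+1) s
      simp only [_root_.val]
      exact Finset.sum_le_sum fun a _ =>
        mul_le_mul_of_nonneg_left (hq' s a) (hπ0 s a)
  exact ⟨fun t ht s a => hq t (hval t (le_of_lt ht)) ht s a, hval⟩
end

section
/- Bellman error decomposition bound: In the setting of the simulation lemma, if the Bellman error satisfies |B(s,a,h)| ≤ β for all (s,a,h), then |E[V^{π,p}_m(s_1,1)] - E[V^{π,p*}_{m*}(s_1,1)]| ≤ H·β. -/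
open Finset

/-- Bellman error decomposition bound: if every Bellman error
`B(s,a,h) = Q^{π,p}_m(s,a,h) - (m*(s,a) + ∑_{s'} p*(s'|s,a) V^{π,p}_m(s',h+1))`
satisfies `|B(s,a,h)| ≤ β`, then the step-1 values of `(p,m)` and `(p*,m*)` from
any initial state `s₁` differ by at most `H·β`. -/
theorem stmt_10 {S A : Type*} [Fintype S] [Fintype A]
    (H : ℕ) (π : S → A → ℝ) (p pstar : S → A → S → ℝ) (m mstar : S → A → ℝ)
    (s₁ : S) (β : ℝ) (hβ : 0 ≤ β)
    (hπ0 : ∀ s a, 0 ≤ π s a) (hπ1 : ∀ s, ∑ a, π s a = 1)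
    (hp0 : ∀ s a s', 0 ≤ pstar s a s') (hp1 : ∀ s a, ∑ s', pstar s a s' = 1)
    (hB : ∀ t < H, ∀ s a,
      |qval π p m t s a - (mstar s a + ∑ s', pstar s a s' * val π p m t s')| ≤ β) :
    |val π p m H s₁ - val π pstar mstar H s₁| ≤ (H : ℝ) * β := by
  induction H generalizing s₁ with
  | zero => simp [_root_.val]
  | succ t ih =>
    have hIH : ∀ s, |val π p m t s - val π pstar mstar t s| ≤ (t : ℝ) * β := fun s =>
      ih s (fun k hk s a => hB k (Nat.lt_succ_of_lt hk) s a)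
    have key : val π p m (t+1) s₁ - val π pstar mstar (t+1) s₁
        = ∑ a, π s₁ a *
          ((qval π p m t s₁ a - (mstar s₁ a + ∑ s', pstar s₁ a s' * val π p m t s'))
            + ∑ s', pstar s₁ a s' * (val π p m t s' - val π pstar mstar t s')) := by
      show _root_.val π p m (t+1) s₁ - _root_.val π pstar mstar (t+1) s₁ = _
      simp only [_root_.val, qval, ← Finset.sum_sub_distrib]
      apply Finset.sum_congr rfl
      intro a _
      have h1 : ∑ s', pstar s₁ a s' * (_root_.val π p m t s' - _root_.val π pstar mstar t s')
          = (∑ s', pstar s₁ a s' * _root_.val π p m t s')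
            - ∑ s', pstar s₁ a s' * _root_.val π pstar mstar t s' := by
        rw [← Finset.sum_sub_distrib]
        exact Finset.sum_congr rfl (fun s' _ => mul_sub _ _ _)
      rw [h1]; ring
    rw [key]
    calc |∑ a, π s₁ a * _| ≤ ∑ a, |π s₁ a *
          ((qval π p m t s₁ a - (mstar s₁ a + ∑ s', pstar s₁ a s' * val π p m t s'))
            + ∑ s', pstar s₁ a s' * (val π p m t s' - val π pstar mstar t s'))| :=
        Finset.abs_sum_le_sum_abs _ _
      _ ≤ ∑ a : A, π s₁ a * (β + (t : ℝ) * β) := by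
        apply Finset.sum_le_sum
        intro a _
        rw [abs_mul, abs_of_nonneg (hπ0 s₁ a)]
        apply mul_le_mul_of_nonneg_left _ (hπ0 s₁ a)
        refine (abs_add_le _ _).trans (add_le_add (hB t (Nat.lt_succ_self t) s₁ a) ?_)
        calc |∑ s', pstar s₁ a s' * (val π p m t s' - val π pstar mstar t s')|
            ≤ ∑ s', |pstar s₁ a s' * (val π p m t s' - val π pstar mstar t s')| :=
              Finset.abs_sum_le_sum_abs _ _
          _ ≤ ∑ s' : S, pstar s₁ a s' * ((t : ℝ) * β) := by
              apply Finset.sum_le_sum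
              intro s' _
              rw [abs_mul, abs_of_nonneg (hp0 s₁ a s')]
              exact mul_le_mul_of_nonneg_left (hIH s') (hp0 s₁ a s')
          _ = (t : ℝ) * β := by rw [← Finset.sum_mul, hp1, one_mul]
      _ = ((t + 1 : ℕ) : ℝ) * β := by
        rw [← Finset.sum_mul, hπ1, one_mul]; push_cast; ring
end
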